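/- arXiv:1706.07707 — 2 statements merged into one kernel-verified Lean document; each statement's English description precedes it below -/
import Mathlib

section
/- Suppose in addition that ε < (1−γ)/(2nΓγ). Then there exists a constant D > 0 such that for every K ≥ 0, Σ_{k=0}^K α_k g_k ≤ D Σ_{k=0}^K α_k². -/
/-!
Stack `x` and `y` into `z = (x, y)`. Then `z^{k+1} = M z^k + (g^k, 0)` with `z^0 = 0`, so `y^k` is
a sum of the lower-left blocks of `M^{k-1-s}` applied to the perturbations `g^s`. That block is
`0` for the exponent `0` and has entries at most `Γ γ^m` for the exponent `m`, whence
`‖y_i^k‖ ≤ Σ_{s<k} c_{k-1-s} g_s` with `Σ_m c_m ≤ Γγ/(1-γ)`. Comparing the projection with the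
point `Σ_j a_ij x_j^k`, which lies in `X` by convexity, gives `‖g_i^k‖ ≤ ε‖y_i^k‖ + 2Bα_k`.
Multiplying the resulting recursion `g_k ≤ 2nBα_k + nε Σ_{s<k} c_{k-1-s} g_s` by the
non-increasing `α_k` and summing, the convolution term is at most `nεΓγ/(1-γ) < 1` times
`Σ_k α_k g_k`, so it can be absorbed into the left-hand side.
-/

open Finset
open scoped RealInnerProductSpace

namespace Matrix

variable {ι R E : Type*} [Fintype ι]

section Semiring

variable [Semiring R] [AddCommMonoid E] [Module R E]

def smulVec (M : Matrix ι ι R) (v : ι → E) : ι → E := fun i => ∑ j, M i j • v j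

theorem smulVec_apply (M : Matrix ι ι R) (v : ι → E) (i : ι) :
    M.smulVec v i = ∑ j, M i j • v j := rfl

theorem smulVec_sum {α : Type*} (M : Matrix ι ι R) (s : Finset α) (v : α → ι → E) :
    M.smulVec (∑ a ∈ s, v a) = ∑ a ∈ s, M.smulVec (v a) := by
  ext i
  simp only [smulVec_apply, Finset.sum_apply, Finset.smul_sum]
  exact Finset.sum_comm

theorem smulVec_smulVec (M N : Matrix ι ι R) (v : ι → E) :
    M.smulVec (N.smulVec v) = (M * N).smulVec v := by
  ext i
  simp only [smulVec_apply, mul_apply, Finset.smul_sum, Finset.sum_smul, smul_smul]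
  exact Finset.sum_comm

theorem one_smulVec [DecidableEq ι] (v : ι → E) : (1 : Matrix ι ι R).smulVec v = v := by
  ext i
  simp [smulVec_apply, one_apply, ite_smul]

theorem eq_sum_pow_smulVec_of_eq_smulVec_add [DecidableEq ι] {M : Matrix ι ι R}
    {z u : ℕ → ι → E} (h0 : z 0 = 0) (hstep : ∀ k, z (k + 1) = M.smulVec (z k) + u k) :
    ∀ K, z K = ∑ s ∈ range K, (M ^ (K - 1 - s)).smulVec (u s)
  | 0 => by simp [h0]
  | K + 1 => by
    rw [hstep, eq_sum_pow_smulVec_of_eq_smulVec_add h0 hstep K, smulVec_sum, sum_range_succ,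
      Nat.add_sub_cancel, Nat.sub_self, pow_zero, one_smulVec]
    congr 1
    refine sum_congr rfl fun s hs => ?_
    rw [smulVec_smulVec, ← pow_succ', Nat.sub_right_comm, Nat.sub_add_cancel]
    have := mem_range.mp hs
    omega

end Semiring

theorem norm_smulVec_inr_le {κ 𝕜 : Type*} [Fintype κ] [NormedField 𝕜] [SeminormedAddCommGroup E]
    [NormedSpace 𝕜 E] (M : Matrix (ι ⊕ κ) (ι ⊕ κ) 𝕜) (u : ι → E) (i : κ) :
    ‖M.smulVec (Sum.elim u 0) (Sum.inr i)‖ ≤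
      ∑ j, ‖M (Sum.inr i) (Sum.inl j)‖ * ‖u j‖ := by
  rw [smulVec_apply, Fintype.sum_sum_type]
  simp only [Sum.elim_inl, Sum.elim_inr, Pi.zero_apply, smul_zero, sum_const_zero, add_zero]
  exact (norm_sum_le _ _).trans (sum_le_sum fun j _ => (norm_smul _ _).le)

end Matrix

theorem norm_inr_le_of_eq_smulVec_add {ι κ 𝕜 E : Type*} [Fintype ι] [Fintype κ] [DecidableEq ι]
    [DecidableEq κ] [NormedField 𝕜] [SeminormedAddCommGroup E] [NormedSpace 𝕜 E]
    {M : Matrix (ι ⊕ κ) (ι ⊕ κ) 𝕜} {z : ℕ → ι ⊕ κ → E} {u : ℕ → ι → E} {c : ℕ → ℝ}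
    (h0 : z 0 = 0) (hstep : ∀ k, z (k + 1) = M.smulVec (z k) + Sum.elim (u k) 0)
    (hc : ∀ m i j, ‖(M ^ m) (Sum.inr i) (Sum.inl j)‖ ≤ c m) (K : ℕ) (i : κ) :
    ‖z K (Sum.inr i)‖ ≤ ∑ s ∈ range K, c (K - 1 - s) * ∑ j, ‖u s j‖ := by
  rw [Matrix.eq_sum_pow_smulVec_of_eq_smulVec_add h0 hstep K, Finset.sum_apply]
  refine (norm_sum_le _ _).trans (sum_le_sum fun s _ => ?_)
  refine (Matrix.norm_smulVec_inr_le _ _ i).trans ?_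
  rw [mul_sum]
  exact sum_le_sum fun j _ => mul_le_mul_of_nonneg_right (hc _ i j) (norm_nonneg _)

theorem norm_pow_inr_inl_le {ι κ 𝕜 : Type*} [Fintype ι] [Fintype κ] [DecidableEq ι] [DecidableEq κ]
    [NormedRing 𝕜] {M W : Matrix (ι ⊕ κ) (ι ⊕ κ) 𝕜} {Γ γ : ℝ}
    (hW : ∀ i j, W (Sum.inr i) (Sum.inl j) = 0)
    (hM : ∀ k i, ∑ j, ‖(M ^ k - W) i j‖ ≤ Γ * γ ^ k) (m : ℕ) (i : κ) (j : ι) :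
    ‖(M ^ m) (Sum.inr i) (Sum.inl j)‖ ≤ if m = 0 then 0 else Γ * γ ^ m := by
  split_ifs with hm
  · simp [hm]
  · calc ‖(M ^ m) (Sum.inr i) (Sum.inl j)‖ = ‖(M ^ m - W) (Sum.inr i) (Sum.inl j)‖ := by
          rw [Matrix.sub_apply, hW, sub_zero]
      _ ≤ ∑ j', ‖(M ^ m - W) (Sum.inr i) j'‖ :=
          single_le_sum (fun _ _ => norm_nonneg _) (mem_univ _)
      _ ≤ Γ * γ ^ m := hM m _

theorem sum_range_ite_zero_geom_le {Γ γ : ℝ} (hΓ : 0 ≤ Γ) (hγ0 : 0 ≤ γ) (hγ1 : γ < 1) (N : ℕ) :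
    ∑ m ∈ range N, (if m = 0 then 0 else Γ * γ ^ m) ≤ Γ * γ / (1 - γ) := by
  rcases N.eq_zero_or_pos with rfl | hN
  · simp only [range_zero, sum_empty]; exact div_nonneg (mul_nonneg hΓ hγ0) (by linarith)
  rw [range_eq_Ico, sum_eq_sum_Ico_succ_bot hN, if_pos rfl, zero_add,
    sum_congr rfl fun m hm => if_neg (Nat.one_le_iff_ne_zero.mp (mem_Ico.mp hm).1), ← mul_sum,
    mul_div_assoc]
  gcongr
  simpa using geom_sum_Ico_le_of_lt_one (m := 1) (n := N) hγ0 hγ1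

theorem sum_mul_sum_conv_le {α g c : ℕ → ℝ} {C : ℝ} (hα : Antitone α) (hα0 : ∀ k, 0 ≤ α k)
    (hg0 : ∀ k, 0 ≤ g k) (hc0 : ∀ m, 0 ≤ c m) (hC : ∀ N, ∑ m ∈ range N, c m ≤ C) (N : ℕ) :
    ∑ k ∈ range N, α k * ∑ s ∈ range k, c (k - 1 - s) * g s ≤
      C * ∑ k ∈ range N, α k * g k := by
  calc ∑ k ∈ range N, α k * ∑ s ∈ range k, c (k - 1 - s) * g s
      ≤ ∑ k ∈ range N, ∑ s ∈ range k, c (k - 1 - s) * (α s * g s) := by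
        refine sum_le_sum fun k _ => ?_
        rw [mul_sum]
        refine sum_le_sum fun s hs => ?_
        have hαks : α k ≤ α s := hα (mem_range.mp hs).le
        nlinarith [mul_nonneg (hc0 (k - 1 - s)) (hg0 s)]
    _ = ∑ s ∈ range N, (∑ k ∈ Ico (s + 1) N, c (k - 1 - s)) * (α s * g s) := by
        simp_rw [sum_mul]
        exact sum_comm' fun k s => by simp only [mem_range, mem_Ico]; omega
    _ ≤ ∑ s ∈ range N, C * (α s * g s) := by
        refine sum_le_sum fun s _ => mul_le_mul_of_nonneg_right ?_ (mul_nonneg (hα0 s) (hg0 s))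
        rw [sum_Ico_eq_sum_range]
        refine (sum_congr rfl fun m _ => ?_).trans_le (hC (N - (s + 1)))
        rw [show s + 1 + m - 1 - s = m by omega]
    _ = C * ∑ k ∈ range N, α k * g k := (mul_sum _ _ _).symm

theorem sum_mul_le_of_le_add_sum_conv {α g c : ℕ → ℝ} {a b C : ℝ} (hα : Antitone α)
    (hα0 : ∀ k, 0 ≤ α k) (hg0 : ∀ k, 0 ≤ g k) (hc0 : ∀ m, 0 ≤ c m) (hb : 0 ≤ b)
    (hC : ∀ N, ∑ m ∈ range N, c m ≤ C) (hbC : b * C < 1)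
    (hg : ∀ k, g k ≤ a * α k + b * ∑ s ∈ range k, c (k - 1 - s) * g s) (N : ℕ) :
    ∑ k ∈ range N, α k * g k ≤ a / (1 - b * C) * ∑ k ∈ range N, α k ^ 2 := by
  set S := ∑ k ∈ range N, α k * g k
  have hS : S ≤ a * ∑ k ∈ range N, α k ^ 2 + b * (C * S) := by
    calc S ≤ ∑ k ∈ range N, (a * α k ^ 2 + b * (α k * ∑ s ∈ range k, c (k - 1 - s) * g s)) :=
          sum_le_sum fun k _ => by nlinarith [mul_le_mul_of_nonneg_left (hg k) (hα0 k)]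
      _ ≤ a * ∑ k ∈ range N, α k ^ 2 + b * (C * S) := by
          rw [sum_add_distrib, ← mul_sum, ← mul_sum]
          gcongr
          exact sum_mul_sum_conv_le hα hα0 hg0 hc0 hC N
  rw [div_mul_eq_mul_div, le_div_iff₀ (by linarith)]
  linarith

theorem norm_proj_sub_sub_le {E : Type*} [SeminormedAddCommGroup E] {X : Set E} {P : E → E}
    (hP : ∀ v w, w ∈ X → ‖P v - v‖ ≤ ‖w - v‖) {w : E} (hw : w ∈ X) (v a : E) :
    ‖P (w + v - a) - w - v‖ ≤ ‖v‖ + 2 * ‖a‖ := by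
  calc ‖P (w + v - a) - w - v‖ = ‖(P (w + v - a) - (w + v - a)) - a‖ := by congr 1; abel
    _ ≤ ‖w - (w + v - a)‖ + ‖a‖ := (norm_sub_le _ _).trans (by gcongr; exact hP _ w hw)
    _ = ‖a - v‖ + ‖a‖ := by congr 2; abel
    _ ≤ ‖v‖ + 2 * ‖a‖ := by linarith [norm_sub_le a v]

theorem sumElim_eq_fromBlocks_smulVec_add {ι R E : Type*} [Fintype ι] [DecidableEq ι] [Ring R]
    [AddCommGroup E] [Module R E] (A Bh : Matrix ι ι R) (ε : R) {x y x' y' u : ι → E}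
    (hu : ∀ i, u i = x' i - ∑ j, A i j • x j - ε • y i)
    (hy' : ∀ i, y' i = x i - ∑ j, A i j • x j + ∑ j, Bh i j • y j - ε • y i) :
    Sum.elim x' y' =
      (Matrix.fromBlocks A (ε • 1) (1 - A) (Bh - ε • 1)).smulVec (Sum.elim x y) + Sum.elim u 0 := by
  ext (i | i)
  · simp [Matrix.smulVec_apply, Fintype.sum_sum_type, Matrix.one_apply, ite_smul, hu]
  · simp only [Sum.elim_inr, hy', Pi.add_apply, Matrix.smulVec_apply, Fintype.sum_sum_type,
      Matrix.fromBlocks_apply₂₁, Matrix.sub_apply, Matrix.one_apply, Sum.elim_inl, sub_smul,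
      ite_smul, one_smul, zero_smul, sum_sub_distrib, sum_ite_eq, mem_univ, ↓reduceIte,
      Matrix.fromBlocks_apply₂₂, Matrix.smul_apply, smul_eq_mul, mul_ite, mul_one, mul_zero,
      Pi.zero_apply, add_zero]
    abel

theorem ddps_weighted_perturbation_sum_general
    {n p : ℕ} (hn : 1 ≤ n)
    (f : Fin n → EuclideanSpace ℝ (Fin p) → ℝ)
    (B : ℝ) (hB : 0 < B)
    (hsubB : ∀ (i : Fin n) (u s : EuclideanSpace ℝ (Fin p)),
      (∀ v, f i u + ⟪s, v - u⟫ ≤ f i v) → ‖s‖ ≤ B)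
    (X : Set (EuclideanSpace ℝ (Fin p)))
    (hXcv : Convex ℝ X)
    (hX0 : (0 : EuclideanSpace ℝ (Fin p)) ∈ X)
    (P : EuclideanSpace ℝ (Fin p) → EuclideanSpace ℝ (Fin p))
    (hPmem : ∀ v, P v ∈ X)
    (hPproj : ∀ v w, w ∈ X → ‖P v - v‖ ≤ ‖w - v‖)
    (A Bh : Matrix (Fin n) (Fin n) ℝ)
    (hAnn : ∀ i j, 0 ≤ A i j) (hArow : ∀ i, ∑ j, A i j = 1)
    (ε : ℝ) (hε : 0 < ε)
    (α : ℕ → ℝ) (hαnn : ∀ k, 0 ≤ α k) (hαdec : ∀ k, α (k + 1) ≤ α k)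
    (x y d : ℕ → Fin n → EuclideanSpace ℝ (Fin p))
    (hx0 : ∀ i, x 0 i = 0) (hy0 : ∀ i, y 0 i = 0)
    (hd : ∀ k i v, f i (x k i) + ⟪d k i, v - x k i⟫ ≤ f i v)
    (hxupd : ∀ k i, x (k + 1) i = P (∑ j, A i j • x k j + ε • y k i - α k • d k i))
    (hyupd : ∀ k i, y (k + 1) i =
      x k i - ∑ j, A i j • x k j + (∑ j, Bh i j • y k j) - ε • y k i)
    (gv : ℕ → Fin n → EuclideanSpace ℝ (Fin p))
    (hgv : ∀ k i, gv k i = x (k + 1) i - ∑ j, A i j • x k j - ε • y k i)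
    (g : ℕ → ℝ) (hg : ∀ k, g k = ∑ i, ‖gv k i‖)
    (Γ γ : ℝ) (hΓ : 0 < Γ) (hγ0 : 0 < γ) (hγ1 : γ < 1)
    (hM : ∀ (k : ℕ) (i : Fin n ⊕ Fin n),
      ∑ j, |((Matrix.fromBlocks A (ε • (1 : Matrix (Fin n) (Fin n) ℝ))
          ((1 : Matrix (Fin n) (Fin n) ℝ) - A) (Bh - ε • (1 : Matrix (Fin n) (Fin n) ℝ))) ^ k
        - Matrix.fromBlocks (Matrix.of fun _ _ => (n : ℝ)⁻¹)
            (Matrix.of fun _ _ => (n : ℝ)⁻¹) 0 0 :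
          Matrix (Fin n ⊕ Fin n) (Fin n ⊕ Fin n) ℝ) i j| ≤ Γ * γ ^ k)
    (hεsmall : ε < (1 - γ) / (2 * n * Γ * γ))
    :
    ∃ D > 0, ∀ K : ℕ,
      ∑ k ∈ Finset.range (K + 1), α k * g k ≤ D * ∑ k ∈ Finset.range (K + 1), (α k) ^ 2 := by
  have hxX : ∀ k i, x k i ∈ X := by
    rintro (_ | k) i
    · exact hx0 i ▸ hX0
    · exact hxupd k i ▸ hPmem _
  have hgv_le : ∀ k i, ‖gv k i‖ ≤ ε * ‖y k i‖ + 2 * B * α k := by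
    intro k i
    have hw := hXcv.sum_mem (fun j _ => hAnn i j) (hArow i) (fun j _ => hxX k j)
    have hαd : ‖α k • d k i‖ ≤ α k * B := by
      rw [norm_smul, Real.norm_of_nonneg (hαnn k)]
      exact mul_le_mul_of_nonneg_left (hsubB i _ _ (hd k i)) (hαnn k)
    have := norm_proj_sub_sub_le hPproj hw (ε • y k i) (α k • d k i)
    rw [← hxupd, ← hgv, norm_smul, Real.norm_of_nonneg hε.le] at this
    linarith
  set c : ℕ → ℝ := fun m => if m = 0 then 0 else Γ * γ ^ m
  have hy_le : ∀ k i, ‖y k i‖ ≤ ∑ s ∈ range k, c (k - 1 - s) * g s := by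
    simp only [hg]
    exact norm_inr_le_of_eq_smulVec_add (z := fun k => Sum.elim (x k) (y k))
      (funext (Sum.rec hx0 hy0))
      (fun k => sumElim_eq_fromBlocks_smulVec_add A Bh ε (hgv k) (hyupd k))
      (norm_pow_inr_inl_le (fun _ _ => rfl) (by simpa only [Real.norm_eq_abs] using hM))
  have hg_le : ∀ k, g k ≤ 2 * n * B * α k + n * ε * ∑ s ∈ range k, c (k - 1 - s) * g s := by
    intro k
    calc g k ≤ ∑ _i : Fin n, (ε * ∑ s ∈ range k, c (k - 1 - s) * g s + 2 * B * α k) := by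
          rw [hg]
          exact sum_le_sum fun i _ => (hgv_le k i).trans (by gcongr; exact hy_le k i)
      _ = _ := by simp only [sum_const, card_univ, Fintype.card_fin, nsmul_eq_mul]; ring
  have hbC : n * ε * (Γ * γ / (1 - γ)) < 1 := by
    have := (lt_div_iff₀ (by positivity)).mp hεsmall
    rw [← mul_div_assoc, div_lt_one (by linarith)]
    nlinarith
  refine ⟨2 * n * B / (1 - n * ε * (Γ * γ / (1 - γ))), div_pos (by positivity) (sub_pos.2 hbC),
    fun K => sum_mul_le_of_le_add_sum_conv (antitone_nat_of_succ_le hαdec) hαnn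
      (fun k => hg k ▸ sum_nonneg fun _ _ => norm_nonneg _)
      (fun m => by positivity) (by positivity)
      (sum_range_ite_zero_geom_le hΓ.le hγ0.le hγ1) hbC hg_le (K + 1)⟩

theorem ddps_weighted_perturbation_sum
    {n p : ℕ} (hn : 1 ≤ n) (hp : 1 ≤ p)
    (f : Fin n → EuclideanSpace ℝ (Fin p) → ℝ)
    (hconv : ∀ i, ConvexOn ℝ Set.univ (f i))
    (B : ℝ) (hB : 0 < B)
    (hsubB : ∀ (i : Fin n) (u s : EuclideanSpace ℝ (Fin p)),
      (∀ v, f i u + ⟪s, v - u⟫ ≤ f i v) → ‖s‖ ≤ B)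
    (X : Set (EuclideanSpace ℝ (Fin p)))
    (hXne : X.Nonempty) (hXcl : IsClosed X) (hXcv : Convex ℝ X)
    (hX0 : (0 : EuclideanSpace ℝ (Fin p)) ∈ X)
    (P : EuclideanSpace ℝ (Fin p) → EuclideanSpace ℝ (Fin p))
    (hPmem : ∀ v, P v ∈ X)
    (hPproj : ∀ v w, w ∈ X → ‖P v - v‖ ≤ ‖w - v‖)
    (A Bh : Matrix (Fin n) (Fin n) ℝ)
    (hAnn : ∀ i j, 0 ≤ A i j) (hArow : ∀ i, ∑ j, A i j = 1)
    (hBnn : ∀ i j, 0 ≤ Bh i j) (hBcol : ∀ j, ∑ i, Bh i j = 1)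
    (ε : ℝ) (hε : 0 < ε)
    (α : ℕ → ℝ) (hαnn : ∀ k, 0 ≤ α k) (hαdec : ∀ k, α (k + 1) ≤ α k)
    (x y d : ℕ → Fin n → EuclideanSpace ℝ (Fin p))
    (hx0 : ∀ i, x 0 i = 0) (hy0 : ∀ i, y 0 i = 0)
    (hd : ∀ k i v, f i (x k i) + ⟪d k i, v - x k i⟫ ≤ f i v)
    (hxupd : ∀ k i, x (k + 1) i = P (∑ j, A i j • x k j + ε • y k i - α k • d k i))
    (hyupd : ∀ k i, y (k + 1) i =
      x k i - ∑ j, A i j • x k j + (∑ j, Bh i j • y k j) - ε • y k i)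
    (gv : ℕ → Fin n → EuclideanSpace ℝ (Fin p))
    (hgv : ∀ k i, gv k i = x (k + 1) i - ∑ j, A i j • x k j - ε • y k i)
    (g : ℕ → ℝ) (hg : ∀ k, g k = ∑ i, ‖gv k i‖)
    (zbar : ℕ → EuclideanSpace ℝ (Fin p))
    (hzbar : ∀ k, zbar k = (n : ℝ)⁻¹ • (∑ i, x k i + ∑ i, y k i))
    (Γ γ : ℝ) (hΓ : 0 < Γ) (hγ0 : 0 < γ) (hγ1 : γ < 1)
    (hM : ∀ (k : ℕ) (i : Fin n ⊕ Fin n),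
      ∑ j, |((Matrix.fromBlocks A (ε • (1 : Matrix (Fin n) (Fin n) ℝ))
          ((1 : Matrix (Fin n) (Fin n) ℝ) - A) (Bh - ε • (1 : Matrix (Fin n) (Fin n) ℝ))) ^ k
        - Matrix.fromBlocks (Matrix.of fun _ _ => (n : ℝ)⁻¹)
            (Matrix.of fun _ _ => (n : ℝ)⁻¹) 0 0 :
          Matrix (Fin n ⊕ Fin n) (Fin n ⊕ Fin n) ℝ) i j| ≤ Γ * γ ^ k)
    (hεsmall : ε < (1 - γ) / (2 * n * Γ * γ))
    :
    ∃ D > 0, ∀ K : ℕ,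
      ∑ k ∈ Finset.range (K + 1), α k * g k ≤ D * ∑ k ∈ Finset.range (K + 1), (α k) ^ 2 :=
  ddps_weighted_perturbation_sum_general hn f B hB hsubB X hXcv hX0 P hPmem hPproj A Bh hAnn hArow ε
    hε α hαnn hαdec x y d hx0 hy0 hd hxupd hyupd gv hgv g hg Γ γ hΓ hγ0 hγ1 hM hεsmall
end

section
/- Suppose in addition that ε < (1−γ)/(2nΓγ). Then there exists a constant E > 0 such that for every agent i ∈ {1,…,n} and every K ≥ 0, Σ_{k=0}^K α_k ‖x_i^k − z̄^k‖ ≤ E Σ_{k=0}^K α_k². -/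
/-!
Stack `z_k = (x_k, y_k)`. The iteration reads `z_{k+1} = M z_k + (g_k, 0)` with `z_0 = 0`, so
`z_k = ∑_{s<k} M^s (g_{k-1-s}, 0)`. Since `M` is column stochastic, the averaging matrix `J`
satisfies `J M = J`, and `J z_k` is `z̄_k` in every top entry and `0` below. Hence `x_k - z̄_k` and
`y_{k+1}` are blocks of `∑_{s<k} (M^{s+m} - J) (g_{k-1-s}, 0)` for `m = 0, 1`, of norm at most
`Γ Q_k` and `Γ γ Q_k` with `Q_k = ∑_{s<k} γ^s g_{k-1-s}`.

The projection step gives `g_k ≤ ε ∑_i ‖y_k^i‖ + 2 n B α_k`, so `g` is driven by its own geometric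
convolution with gain `n ε Γ γ < (1 - γ) / 2`. Weighting by the non-increasing `α_k` and summing
closes the loop: `(1 - γ) ∑ α_k Q_k ≤ ∑ α_k g_k ≤ n ε Γ γ ∑ α_k Q_k + 2 n B ∑ α_k²`.
-/

open Finset
open scoped RealInnerProductSpace

namespace Matrix

section Algebra

variable {ι R E : Type*} [Fintype ι] [CommRing R] [AddCommGroup E] [Module R E]

/-- The Kronecker product `M ⊗ I` acting on a stacked family of vectors. -/
def mulVecFam (M : Matrix ι ι R) : (ι → E) →ₗ[R] ι → E where
  toFun v q := ∑ r, M q r • v r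
  map_add' u v := by ext q; simp [smul_add, sum_add_distrib]
  map_smul' c v := by ext q; simp [smul_sum, smul_smul, mul_comm]

@[simp]
theorem mulVecFam_apply (M : Matrix ι ι R) (v : ι → E) (q : ι) :
    M.mulVecFam v q = ∑ r, M q r • v r := rfl

theorem mulVecFam_mul (M N : Matrix ι ι R) (v : ι → E) :
    (M * N).mulVecFam v = M.mulVecFam (N.mulVecFam v) := by
  ext q
  simp only [mulVecFam_apply, mul_apply, sum_smul, smul_sum, smul_smul]
  exact sum_comm

@[simp]
theorem mulVecFam_one [DecidableEq ι] (v : ι → E) : (1 : Matrix ι ι R).mulVecFam v = v := by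
  ext q
  simp [one_apply, ite_smul]

theorem mulVecFam_sub (M N : Matrix ι ι R) (v : ι → E) :
    (M - N).mulVecFam v = M.mulVecFam v - N.mulVecFam v := by
  ext q
  simp [sub_smul]

theorem fromBlocks_const_mulVecFam (c : R) (u v : ι → E) :
    (fromBlocks (of fun _ _ => c) (of fun _ _ => c) 0 0 : Matrix (ι ⊕ ι) (ι ⊕ ι) R).mulVecFam
      (Sum.elim u v) = Sum.elim (fun _ => c • (∑ i, u i + ∑ i, v i)) 0 := by
  ext (i | i) <;> simp [Fintype.sum_sum_type, smul_add, smul_sum]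

theorem mul_eq_self_of_sum_col_eq_one {J M : Matrix ι ι R} (hJ : ∀ q r r', J q r = J q r')
    (hM : ∀ r, ∑ t, M t r = 1) : J * M = J := by
  ext q r
  rw [mul_apply, ← mul_one (J q r), ← hM r, mul_sum]
  exact sum_congr rfl fun t _ => by rw [hJ q t r]

theorem eq_sum_mulVecFam_pow [DecidableEq ι] {M : Matrix ι ι R} {Z G : ℕ → ι → E}
    (hZ0 : Z 0 = 0) (hZ : ∀ k, Z (k + 1) = M.mulVecFam (Z k) + G k) (k : ℕ) :
    Z k = ∑ s ∈ range k, (M ^ s).mulVecFam (G (k - 1 - s)) := by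
  induction k with
  | zero => simp [hZ0]
  | succ k ih =>
    rw [hZ, ih, map_sum, sum_range_succ', pow_zero, mulVecFam_one]
    congr 1
    refine sum_congr rfl fun s _ => ?_
    rw [← mulVecFam_mul, ← pow_succ', show k + 1 - 1 - (s + 1) = k - 1 - s by omega]

theorem mulVecFam_pow_sub_eq_sum [DecidableEq ι] {M J : Matrix ι ι R} (hJM : J * M = J)
    {Z G : ℕ → ι → E} (hZ0 : Z 0 = 0) (hZ : ∀ k, Z (k + 1) = M.mulVecFam (Z k) + G k)
    (m k : ℕ) :
    (M ^ m).mulVecFam (Z k) - J.mulVecFam (Z k) =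
      ∑ s ∈ range k, (M ^ (s + m) - J).mulVecFam (G (k - 1 - s)) := by
  have hJMs : ∀ s, J * M ^ s = J := by
    intro s
    induction s with
    | zero => simp
    | succ s ih => rw [pow_succ, ← mul_assoc, ih, hJM]
  rw [eq_sum_mulVecFam_pow hZ0 hZ k, map_sum, map_sum, ← sum_sub_distrib]
  refine sum_congr rfl fun s _ => ?_
  rw [← mulVecFam_mul, ← mulVecFam_mul, hJMs, ← pow_add, add_comm m, mulVecFam_sub]

end Algebra

end Matrix

def geomConv (γ : ℝ) (a : ℕ → ℝ) (k : ℕ) : ℝ := ∑ s ∈ range k, γ ^ s * a (k - 1 - s)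

section GeomConv

variable {γ : ℝ} {a α : ℕ → ℝ}

@[simp]
theorem geomConv_zero : geomConv γ a 0 = 0 := rfl

theorem geomConv_succ (k : ℕ) : geomConv γ a (k + 1) = γ * geomConv γ a k + a k := by
  rw [geomConv, sum_range_succ', pow_zero, one_mul, Nat.add_sub_cancel, Nat.sub_zero, geomConv,
    mul_sum]
  congr 1
  refine sum_congr rfl fun s _ => ?_
  rw [pow_succ, show k - (s + 1) = k - 1 - s by omega]
  ring

theorem geomConv_nonneg (hγ : 0 ≤ γ) (ha : ∀ k, 0 ≤ a k) (k : ℕ) : 0 ≤ geomConv γ a k :=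
  sum_nonneg fun _ _ => mul_nonneg (pow_nonneg hγ _) (ha _)

theorem norm_sum_range_le_geomConv {F : Type*} [SeminormedAddCommGroup F] {w : ℕ → F} {C : ℝ}
    {k : ℕ} (h : ∀ s < k, ‖w s‖ ≤ C * (γ ^ s * a (k - 1 - s))) :
    ‖∑ s ∈ range k, w s‖ ≤ C * geomConv γ a k := by
  rw [geomConv, mul_sum]
  exact (norm_sum_le _ _).trans (sum_le_sum fun s hs => h s (mem_range.mp hs))

theorem mul_geomConv_le_geomConv_mul (hγ : 0 ≤ γ) (ha : ∀ k, 0 ≤ a k) (hα : Antitone α)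
    (k : ℕ) : α k * geomConv γ a k ≤ geomConv γ (fun t => α t * a t) k := by
  rw [geomConv, geomConv, mul_sum]
  refine sum_le_sum fun s hs => ?_
  have hαs : α k ≤ α (k - 1 - s) := hα (by omega)
  calc α k * (γ ^ s * a (k - 1 - s)) = γ ^ s * (α k * a (k - 1 - s)) := by ring
    _ ≤ γ ^ s * (α (k - 1 - s) * a (k - 1 - s)) := by
      gcongr
      exact ha _

theorem one_sub_mul_sum_geomConv_le (hγ : 0 ≤ γ) (ha : ∀ k, 0 ≤ a k) (N : ℕ) :
    (1 - γ) * ∑ k ∈ range N, geomConv γ a k ≤ ∑ k ∈ range N, a k := by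
  have hshift : ∑ k ∈ range N, geomConv γ a k ≤ ∑ k ∈ range N, geomConv γ a (k + 1) := by
    have := sum_range_succ (geomConv γ a) N
    rw [sum_range_succ', geomConv_zero, add_zero] at this
    linarith [geomConv_nonneg hγ ha N]
  have hrec : ∑ k ∈ range N, geomConv γ a (k + 1) =
      γ * ∑ k ∈ range N, geomConv γ a k + ∑ k ∈ range N, a k := by
    rw [mul_sum, ← sum_add_distrib]
    exact sum_congr rfl fun k _ => geomConv_succ k
  linarith

theorem one_sub_mul_sum_mul_geomConv_le (hγ : 0 ≤ γ) (hγ1 : γ ≤ 1) (hα0 : ∀ k, 0 ≤ α k)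
    (hα : Antitone α) (ha : ∀ k, 0 ≤ a k) (N : ℕ) :
    (1 - γ) * ∑ k ∈ range N, α k * geomConv γ a k ≤ ∑ k ∈ range N, α k * a k := by
  refine le_trans ?_ (one_sub_mul_sum_geomConv_le hγ (fun k => mul_nonneg (hα0 k) (ha k)) N)
  gcongr with k
  exact mul_geomConv_le_geomConv_mul hγ ha hα k

theorem sum_mul_le_of_le_geomConv {c b : ℝ} (hγ : 0 ≤ γ) (hc : 0 ≤ c) (hα0 : ∀ k, 0 ≤ α k)
    (hα : Antitone α) (ha : ∀ k, 0 ≤ a k) (ha_zero : a 0 ≤ b * α 0)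
    (ha_succ : ∀ k, a (k + 1) ≤ c * geomConv γ a k + b * α (k + 1)) (K : ℕ) :
    ∑ k ∈ range (K + 1), α k * a k ≤
      c * ∑ k ∈ range (K + 1), α k * geomConv γ a k + b * ∑ k ∈ range (K + 1), α k ^ 2 := by
  have hstep : ∀ k, α (k + 1) * a (k + 1) ≤ c * (α k * geomConv γ a k) + b * α (k + 1) ^ 2 := by
    intro k
    have hQ := geomConv_nonneg hγ ha k
    calc α (k + 1) * a (k + 1) ≤ α (k + 1) * (c * geomConv γ a k + b * α (k + 1)) :=
          mul_le_mul_of_nonneg_left (ha_succ k) (hα0 _)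
      _ = c * (α (k + 1) * geomConv γ a k) + b * α (k + 1) ^ 2 := by ring
      _ ≤ c * (α k * geomConv γ a k) + b * α (k + 1) ^ 2 := by
        gcongr
        exact hα (Nat.le_succ k)
  have hlast : 0 ≤ α K * geomConv γ a K := mul_nonneg (hα0 K) (geomConv_nonneg hγ ha K)
  have hfirst : α 0 * a 0 ≤ b * α 0 ^ 2 := by
    nlinarith [mul_le_mul_of_nonneg_left ha_zero (hα0 0)]
  have hsum := sum_le_sum fun k (_ : k ∈ range K) => hstep k
  rw [sum_add_distrib, ← mul_sum, ← mul_sum] at hsum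
  rw [sum_range_succ', sum_range_succ _ K, sum_range_succ' (fun k => α k ^ 2)]
  nlinarith

/-- A discrete Gronwall estimate. -/
theorem sum_mul_geomConv_le_of_le_geomConv {c b : ℝ} (hγ : 0 ≤ γ) (hc : 0 ≤ c)
    (hcγ : 2 * c < 1 - γ) (hα0 : ∀ k, 0 ≤ α k) (hα : Antitone α) (ha : ∀ k, 0 ≤ a k)
    (ha_zero : a 0 ≤ b * α 0) (ha_succ : ∀ k, a (k + 1) ≤ c * geomConv γ a k + b * α (k + 1))
    (K : ℕ) :
    ∑ k ∈ range (K + 1), α k * geomConv γ a k ≤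
      2 * b / (1 - γ) * ∑ k ∈ range (K + 1), α k ^ 2 := by
  have hS : 0 ≤ ∑ k ∈ range (K + 1), α k * geomConv γ a k :=
    sum_nonneg fun k _ => mul_nonneg (hα0 k) (geomConv_nonneg hγ ha k)
  have hlow := one_sub_mul_sum_mul_geomConv_le hγ (by linarith) hα0 hα ha (K + 1)
  have hup := sum_mul_le_of_le_geomConv hγ hc hα0 hα ha ha_zero ha_succ K
  rw [div_mul_eq_mul_div, le_div_iff₀ (by linarith)]
  nlinarith [mul_le_mul_of_nonneg_right hcγ.le hS]

end GeomConv

namespace Matrix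

variable {ι E : Type*} [Fintype ι] [SeminormedAddCommGroup E] [NormedSpace ℝ E]

theorem norm_mulVecFam_apply_le (N : Matrix ι ι ℝ) (v : ι → E) {q : ι} {c : ℝ}
    (hc : ∀ r, |N q r| ≤ c) : ‖N.mulVecFam v q‖ ≤ c * ∑ r, ‖v r‖ := by
  rw [mulVecFam_apply, mul_sum]
  refine (norm_sum_le _ _).trans (sum_le_sum fun r _ => ?_)
  rw [norm_smul, Real.norm_eq_abs]
  exact mul_le_mul_of_nonneg_right (hc r) (norm_nonneg _)

theorem norm_mulVecFam_pow_sub_apply_le [DecidableEq ι] {M J : Matrix ι ι ℝ} {Γ γ : ℝ}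
    (hJM : J * M = J) (hMJ : ∀ k q, ∑ r, |(M ^ k - J) q r| ≤ Γ * γ ^ k)
    {Z G : ℕ → ι → E} (hZ0 : Z 0 = 0) (hZ : ∀ k, Z (k + 1) = M.mulVecFam (Z k) + G k)
    (m k : ℕ) (q : ι) :
    ‖(M ^ m).mulVecFam (Z k) q - J.mulVecFam (Z k) q‖ ≤
      Γ * γ ^ m * geomConv γ (fun t => ∑ r, ‖G t r‖) k := by
  rw [← Pi.sub_apply, mulVecFam_pow_sub_eq_sum hJM hZ0 hZ, Finset.sum_apply]
  refine norm_sum_range_le_geomConv fun s _ => ?_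
  have hentry : ∀ r, |(M ^ (s + m) - J) q r| ≤ Γ * γ ^ (s + m) := fun r =>
    (single_le_sum (fun r _ => abs_nonneg _) (mem_univ r)).trans (hMJ (s + m) q)
  refine (norm_mulVecFam_apply_le _ _ hentry).trans_eq ?_
  ring

end Matrix

theorem norm_proj_sub_le {F : Type*} [SeminormedAddCommGroup F] {P : F → F} {w : F}
    (hP : ∀ v, ‖P v - v‖ ≤ ‖w - v‖) (u e : F) : ‖P (w + u - e) - w - u‖ ≤ ‖u‖ + 2 * ‖e‖ := by
  have hPv := hP (w + u - e)
  rw [show w - (w + u - e) = e - u by abel] at hPv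
  calc ‖P (w + u - e) - w - u‖ = ‖(P (w + u - e) - (w + u - e)) - e‖ := by congr 1; abel
    _ ≤ ‖e - u‖ + ‖e‖ := (norm_sub_le _ _).trans (by gcongr)
    _ ≤ ‖u‖ + 2 * ‖e‖ := by linarith [norm_sub_le e u]

section DDPSMatrix

open Matrix

variable {ι R E : Type*} [Fintype ι] [DecidableEq ι] [CommRing R] [AddCommGroup E] [Module R E]

def ddpsMatrix (A Bh : Matrix ι ι R) (ε : R) : Matrix (ι ⊕ ι) (ι ⊕ ι) R :=
  fromBlocks A (ε • 1) (1 - A) (Bh - ε • 1)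

theorem sum_ddpsMatrix_apply (A Bh : Matrix ι ι R) (ε : R) (hBh : ∀ j, ∑ i, Bh i j = 1)
    (r : ι ⊕ ι) : ∑ q, ddpsMatrix A Bh ε q r = 1 := by
  rcases r with j | j <;>
    simp [ddpsMatrix, Fintype.sum_sum_type, sum_sub_distrib, hBh, one_apply]

theorem sumElim_eq_ddpsMatrix_mulVecFam_add (A Bh : Matrix ι ι R) (ε : R) {x y x' y' g : ι → E}
    (hx : ∀ i, g i = x' i - ∑ j, A i j • x j - ε • y i)
    (hy : ∀ i, y' i = x i - ∑ j, A i j • x j + (∑ j, Bh i j • y j) - ε • y i) :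
    Sum.elim x' y' = (ddpsMatrix A Bh ε).mulVecFam (Sum.elim x y) + Sum.elim g 0 := by
  ext (i | i)
  · simp [ddpsMatrix, Fintype.sum_sum_type, one_apply, ite_smul, hx]
  · simp only [Sum.elim_inr, hy, ddpsMatrix, Pi.add_apply, mulVecFam_apply, Fintype.sum_sum_type,
      fromBlocks_apply₂₁, fromBlocks_apply₂₂, Matrix.sub_apply, Matrix.smul_apply, one_apply,
      Sum.elim_inl, sub_smul, ite_smul, one_smul, zero_smul, sum_sub_distrib, sum_ite_eq, mem_univ,
      ↓reduceIte, smul_eq_mul, mul_ite, mul_one, mul_zero, Pi.zero_apply, add_zero]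
    abel

end DDPSMatrix

section DDPS

open Matrix

variable {n : ℕ} {E : Type*} [SeminormedAddCommGroup E] [NormedSpace ℝ E]
  {A Bh : Matrix (Fin n) (Fin n) ℝ} {ε : ℝ} {x y gv : ℕ → Fin n → E}

theorem ddps_consensus_bounds {Γ γ : ℝ} {g : ℕ → ℝ} {zbar : ℕ → E}
    (hBcol : ∀ j, ∑ i, Bh i j = 1) (hx0 : ∀ i, x 0 i = 0) (hy0 : ∀ i, y 0 i = 0)
    (hyupd : ∀ k i, y (k + 1) i =
      x k i - ∑ j, A i j • x k j + (∑ j, Bh i j • y k j) - ε • y k i)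
    (hgv : ∀ k i, gv k i = x (k + 1) i - ∑ j, A i j • x k j - ε • y k i)
    (hg : ∀ k, g k = ∑ i, ‖gv k i‖)
    (hzbar : ∀ k, zbar k = (n : ℝ)⁻¹ • (∑ i, x k i + ∑ i, y k i))
    (hM : ∀ k q, ∑ r, |(ddpsMatrix A Bh ε ^ k -
      fromBlocks (of fun _ _ => (n : ℝ)⁻¹) (of fun _ _ => (n : ℝ)⁻¹) 0 0 :
        Matrix (Fin n ⊕ Fin n) (Fin n ⊕ Fin n) ℝ) q r| ≤ Γ * γ ^ k)
    (k : ℕ) (i : Fin n) :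
    ‖x k i - zbar k‖ ≤ Γ * geomConv γ g k ∧ ‖y (k + 1) i‖ ≤ Γ * γ * geomConv γ g k := by
  let J : Matrix (Fin n ⊕ Fin n) (Fin n ⊕ Fin n) ℝ :=
    fromBlocks (of fun _ _ => (n : ℝ)⁻¹) (of fun _ _ => (n : ℝ)⁻¹) 0 0
  let Z : ℕ → Fin n ⊕ Fin n → E := fun k => Sum.elim (x k) (y k)
  let G : ℕ → Fin n ⊕ Fin n → E := fun k => Sum.elim (gv k) 0
  have hZ0 : Z 0 = 0 := by ext (i | i) : 1 <;> simp [Z, hx0, hy0]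
  have hZ (k : ℕ) : Z (k + 1) = (ddpsMatrix A Bh ε).mulVecFam (Z k) + G k :=
    sumElim_eq_ddpsMatrix_mulVecFam_add A Bh ε (hgv k) (hyupd k)
  have hJM : J * ddpsMatrix A Bh ε = J := mul_eq_self_of_sum_col_eq_one
    (by rintro (i | i) (j | j) (j' | j') <;> rfl) (sum_ddpsMatrix_apply A Bh ε hBcol)
  have hJZ : J.mulVecFam (Z k) = Sum.elim (fun _ => zbar k) 0 := by
    rw [fromBlocks_const_mulVecFam, hzbar]
  have hG : (fun t => ∑ r, ‖G t r‖) = g := by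
    ext t
    simp [G, Fintype.sum_sum_type, hg]
  have hcons := norm_mulVecFam_pow_sub_apply_le hJM hM hZ0 hZ
  rw [hG] at hcons
  constructor
  · have hx := hcons 0 k (Sum.inl i)
    rw [pow_zero, mulVecFam_one, hJZ] at hx
    simpa [Z] using hx
  · -- `G k` vanishes on the bottom block, so `y (k + 1)` is the bottom block of `M z_k`.
    have hZk := congrFun (hZ k) (Sum.inr i)
    change y (k + 1) i = _ + 0 at hZk
    have hy := hcons 1 k (Sum.inr i)
    rw [pow_one, hJZ] at hy
    rw [hZk, add_zero]
    simpa using hy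

theorem ddps_norm_residual_le {X : Set E} {P : E → E} {α : ℕ → ℝ} {d : ℕ → Fin n → E} {B : ℝ}
    (hXcv : Convex ℝ X) (hX0 : 0 ∈ X) (hPmem : ∀ v, P v ∈ X)
    (hPproj : ∀ v w, w ∈ X → ‖P v - v‖ ≤ ‖w - v‖)
    (hAnn : ∀ i j, 0 ≤ A i j) (hArow : ∀ i, ∑ j, A i j = 1) (hε : 0 ≤ ε)
    (hα : ∀ k, 0 ≤ α k) (hdB : ∀ k i, ‖d k i‖ ≤ B) (hx0 : ∀ i, x 0 i = 0)
    (hxupd : ∀ k i, x (k + 1) i = P (∑ j, A i j • x k j + ε • y k i - α k • d k i))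
    (hgv : ∀ k i, gv k i = x (k + 1) i - ∑ j, A i j • x k j - ε • y k i) (k : ℕ) (i : Fin n) :
    ‖gv k i‖ ≤ ε * ‖y k i‖ + 2 * B * α k := by
  have hxX (j : Fin n) : x k j ∈ X := by
    cases k with
    | zero => exact hx0 j ▸ hX0
    | succ k => exact hxupd k j ▸ hPmem _
  have hw := hXcv.sum_mem (fun j _ => hAnn i j) (hArow i) (fun j _ => hxX j)
  have hproj := norm_proj_sub_le (fun v => hPproj v _ hw) (ε • y k i) (α k • d k i)
  rw [norm_smul, norm_smul, Real.norm_of_nonneg hε, Real.norm_of_nonneg (hα k), ← hxupd,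
    ← hgv] at hproj
  nlinarith [hdB k i, hα k]

end DDPS

theorem ddps_weighted_consensus_sum_general
    {n p : ℕ} (hn : 1 ≤ n)
    (f : Fin n → EuclideanSpace ℝ (Fin p) → ℝ)
    (B : ℝ) (hB : 0 < B)
    (hsubB : ∀ (i : Fin n) (u s : EuclideanSpace ℝ (Fin p)),
      (∀ v, f i u + ⟪s, v - u⟫ ≤ f i v) → ‖s‖ ≤ B)
    (X : Set (EuclideanSpace ℝ (Fin p)))
    (hXcv : Convex ℝ X)
    (hX0 : (0 : EuclideanSpace ℝ (Fin p)) ∈ X)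
    (P : EuclideanSpace ℝ (Fin p) → EuclideanSpace ℝ (Fin p))
    (hPmem : ∀ v, P v ∈ X)
    (hPproj : ∀ v w, w ∈ X → ‖P v - v‖ ≤ ‖w - v‖)
    (A Bh : Matrix (Fin n) (Fin n) ℝ)
    (hAnn : ∀ i j, 0 ≤ A i j) (hArow : ∀ i, ∑ j, A i j = 1)
    (hBcol : ∀ j, ∑ i, Bh i j = 1)
    (ε : ℝ) (hε : 0 < ε)
    (α : ℕ → ℝ) (hαnn : ∀ k, 0 ≤ α k) (hαdec : ∀ k, α (k + 1) ≤ α k)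
    (x y d : ℕ → Fin n → EuclideanSpace ℝ (Fin p))
    (hx0 : ∀ i, x 0 i = 0) (hy0 : ∀ i, y 0 i = 0)
    (hd : ∀ k i v, f i (x k i) + ⟪d k i, v - x k i⟫ ≤ f i v)
    (hxupd : ∀ k i, x (k + 1) i = P (∑ j, A i j • x k j + ε • y k i - α k • d k i))
    (hyupd : ∀ k i, y (k + 1) i =
      x k i - ∑ j, A i j • x k j + (∑ j, Bh i j • y k j) - ε • y k i)
    (gv : ℕ → Fin n → EuclideanSpace ℝ (Fin p))
    (hgv : ∀ k i, gv k i = x (k + 1) i - ∑ j, A i j • x k j - ε • y k i)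
    (g : ℕ → ℝ) (hg : ∀ k, g k = ∑ i, ‖gv k i‖)
    (zbar : ℕ → EuclideanSpace ℝ (Fin p))
    (hzbar : ∀ k, zbar k = (n : ℝ)⁻¹ • (∑ i, x k i + ∑ i, y k i))
    (Γ γ : ℝ) (hΓ : 0 < Γ) (hγ0 : 0 < γ) (hγ1 : γ < 1)
    (hM : ∀ (k : ℕ) (i : Fin n ⊕ Fin n),
      ∑ j, |((Matrix.fromBlocks A (ε • (1 : Matrix (Fin n) (Fin n) ℝ))
          ((1 : Matrix (Fin n) (Fin n) ℝ) - A) (Bh - ε • (1 : Matrix (Fin n) (Fin n) ℝ))) ^ k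
        - Matrix.fromBlocks (Matrix.of fun _ _ => (n : ℝ)⁻¹)
            (Matrix.of fun _ _ => (n : ℝ)⁻¹) 0 0 :
          Matrix (Fin n ⊕ Fin n) (Fin n ⊕ Fin n) ℝ) i j| ≤ Γ * γ ^ k)
    (hεsmall : ε < (1 - γ) / (2 * n * Γ * γ))
    :
    ∃ E > 0, ∀ (i : Fin n) (K : ℕ),
      ∑ k ∈ Finset.range (K + 1), α k * ‖x k i - zbar k‖ ≤
        E * ∑ k ∈ Finset.range (K + 1), (α k) ^ 2 := by
  have hres := ddps_norm_residual_le hXcv hX0 hPmem hPproj hAnn hArow hε.le hαnn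
    (fun k i => hsubB i _ _ (hd k i)) hx0 hxupd hgv
  have hcons := ddps_consensus_bounds hBcol hx0 hy0 hyupd hgv hg hzbar hM
  have hg0 : g 0 ≤ 2 * n * B * α 0 := by
    calc g 0 ≤ ∑ _i : Fin n, 2 * B * α 0 :=
          (hg 0).trans_le (sum_le_sum fun i _ => by simpa [hy0] using hres 0 i)
      _ = 2 * n * B * α 0 := by rw [sum_const, card_univ, Fintype.card_fin, nsmul_eq_mul]; ring
  have hgs (k : ℕ) : g (k + 1) ≤ n * ε * Γ * γ * geomConv γ g k + 2 * n * B * α (k + 1) := by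
    calc g (k + 1) ≤ ∑ _i : Fin n, (ε * (Γ * γ * geomConv γ g k) + 2 * B * α (k + 1)) :=
          (hg _).trans_le (sum_le_sum fun i _ => (hres _ i).trans (by gcongr; exact (hcons k i).2))
      _ = _ := by rw [sum_const, card_univ, Fintype.card_fin, nsmul_eq_mul]; ring
  have hsmall : 2 * (n * ε * Γ * γ) < 1 - γ := by
    have : (0 : ℝ) < 2 * n * Γ * γ := by positivity
    rw [lt_div_iff₀ this] at hεsmall
    linarith
  refine ⟨4 * n * B * Γ / (1 - γ), by have := sub_pos.2 hγ1; positivity, fun i K => ?_⟩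
  calc ∑ k ∈ range (K + 1), α k * ‖x k i - zbar k‖
      ≤ Γ * ∑ k ∈ range (K + 1), α k * geomConv γ g k := by
        rw [mul_sum]
        exact sum_le_sum fun k _ =>
          (mul_le_mul_of_nonneg_left (hcons k i).1 (hαnn k)).trans_eq (mul_left_comm _ _ _)
    _ ≤ Γ * (2 * (2 * n * B) / (1 - γ) * ∑ k ∈ range (K + 1), α k ^ 2) := by
        gcongr
        exact sum_mul_geomConv_le_of_le_geomConv hγ0.le (by positivity) hsmall hαnn
          (antitone_nat_of_succ_le hαdec)
          (fun k => (hg k).symm ▸ sum_nonneg fun _ _ => norm_nonneg _) hg0 hgs K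
    _ = _ := by ring

theorem ddps_weighted_consensus_sum
    {n p : ℕ} (hn : 1 ≤ n) (hp : 1 ≤ p)
    (f : Fin n → EuclideanSpace ℝ (Fin p) → ℝ)
    (hconv : ∀ i, ConvexOn ℝ Set.univ (f i))
    (B : ℝ) (hB : 0 < B)
    (hsubB : ∀ (i : Fin n) (u s : EuclideanSpace ℝ (Fin p)),
      (∀ v, f i u + ⟪s, v - u⟫ ≤ f i v) → ‖s‖ ≤ B)
    (X : Set (EuclideanSpace ℝ (Fin p)))
    (hXne : X.Nonempty) (hXcl : IsClosed X) (hXcv : Convex ℝ X)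
    (hX0 : (0 : EuclideanSpace ℝ (Fin p)) ∈ X)
    (P : EuclideanSpace ℝ (Fin p) → EuclideanSpace ℝ (Fin p))
    (hPmem : ∀ v, P v ∈ X)
    (hPproj : ∀ v w, w ∈ X → ‖P v - v‖ ≤ ‖w - v‖)
    (A Bh : Matrix (Fin n) (Fin n) ℝ)
    (hAnn : ∀ i j, 0 ≤ A i j) (hArow : ∀ i, ∑ j, A i j = 1)
    (hBnn : ∀ i j, 0 ≤ Bh i j) (hBcol : ∀ j, ∑ i, Bh i j = 1)
    (ε : ℝ) (hε : 0 < ε)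
    (α : ℕ → ℝ) (hαnn : ∀ k, 0 ≤ α k) (hαdec : ∀ k, α (k + 1) ≤ α k)
    (x y d : ℕ → Fin n → EuclideanSpace ℝ (Fin p))
    (hx0 : ∀ i, x 0 i = 0) (hy0 : ∀ i, y 0 i = 0)
    (hd : ∀ k i v, f i (x k i) + ⟪d k i, v - x k i⟫ ≤ f i v)
    (hxupd : ∀ k i, x (k + 1) i = P (∑ j, A i j • x k j + ε • y k i - α k • d k i))
    (hyupd : ∀ k i, y (k + 1) i =
      x k i - ∑ j, A i j • x k j + (∑ j, Bh i j • y k j) - ε • y k i)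
    (gv : ℕ → Fin n → EuclideanSpace ℝ (Fin p))
    (hgv : ∀ k i, gv k i = x (k + 1) i - ∑ j, A i j • x k j - ε • y k i)
    (g : ℕ → ℝ) (hg : ∀ k, g k = ∑ i, ‖gv k i‖)
    (zbar : ℕ → EuclideanSpace ℝ (Fin p))
    (hzbar : ∀ k, zbar k = (n : ℝ)⁻¹ • (∑ i, x k i + ∑ i, y k i))
    (Γ γ : ℝ) (hΓ : 0 < Γ) (hγ0 : 0 < γ) (hγ1 : γ < 1)
    (hM : ∀ (k : ℕ) (i : Fin n ⊕ Fin n),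
      ∑ j, |((Matrix.fromBlocks A (ε • (1 : Matrix (Fin n) (Fin n) ℝ))
          ((1 : Matrix (Fin n) (Fin n) ℝ) - A) (Bh - ε • (1 : Matrix (Fin n) (Fin n) ℝ))) ^ k
        - Matrix.fromBlocks (Matrix.of fun _ _ => (n : ℝ)⁻¹)
            (Matrix.of fun _ _ => (n : ℝ)⁻¹) 0 0 :
          Matrix (Fin n ⊕ Fin n) (Fin n ⊕ Fin n) ℝ) i j| ≤ Γ * γ ^ k)
    (hεsmall : ε < (1 - γ) / (2 * n * Γ * γ))
    :
    ∃ E > 0, ∀ (i : Fin n) (K : ℕ),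
      ∑ k ∈ Finset.range (K + 1), α k * ‖x k i - zbar k‖ ≤
        E * ∑ k ∈ Finset.range (K + 1), (α k) ^ 2 :=
  ddps_weighted_consensus_sum_general hn f B hB hsubB X hXcv hX0 P hPmem hPproj A Bh hAnn hArow
    hBcol ε hε α hαnn hαdec x y d hx0 hy0 hd hxupd hyupd gv hgv g hg zbar hzbar Γ γ hΓ hγ0 hγ1 hM
    hεsmall
end
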